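/- In the free Lie algebra L on x, y, the element Θ(x, ad_y^{2n+1}(x)) vanishes in F(L); equivalently, tr(x · ad_y^{2n+1}(x)) = 0 in A/[A,A], where ad_y^k(x) denotes the k-fold bracket [y,[y,...,[y,x]...]]. -/
import Mathlib


noncomputable section
open TensorProduct

abbrev A : Type := FreeAlgebra ℝ (Fin 2)
abbrev B : Type := A ⊗[ℝ] A

def X : A := FreeAlgebra.ι ℝ 0
def Y : A := FreeAlgebra.ι ℝ 1

/-- Generator matrices used to define the noncommutative partial derivative `pd d`. -/
def genMat (d i : Fin 2) : Matrix (Fin 2) (Fin 2) B :=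
  !![(Algebra.TensorProduct.includeLeft : A →ₐ[ℝ] B) (FreeAlgebra.ι ℝ i), if i = d then 1 else 0;
     0, Algebra.TensorProduct.includeRight (FreeAlgebra.ι ℝ i)]

def Φmat (d : Fin 2) : A →ₐ[ℝ] Matrix (Fin 2) (Fin 2) B :=
  FreeAlgebra.lift ℝ (genMat d)

/-- The noncommutative partial derivative `∂_x` (for `d = 0`) resp. `∂_y` (for `d = 1`):
on a monomial it splits the word at each occurrence of the letter `d`. -/
def pd (d : Fin 2) (a : A) : B := Φmat d a 0 1

/-- The subspace `[A,A]` spanned by commutators; `tr(A) = A/[A,A]` is the trace space. -/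
def commSub : Submodule ℝ A := Submodule.span ℝ {p : A | ∃ a b : A, p = a * b - b * a}

/-- The trace projection `tr : A → A/[A,A]`. -/
def trc (a : A) : A ⧸ commSub := Submodule.Quotient.mk a

/-- Reversed multiplication `μ_flip : A ⊗ A → A`, `b ⊗ c ↦ c·b`. -/
def flipMul : B →ₗ[ℝ] A :=
  (LinearMap.mul' ℝ A).comp (TensorProduct.comm ℝ A A).toLinearMap

/-- The adjoint operator `ad_y : A → A`, `l ↦ [y,l] = yl − ly`. -/
def adY (l : A) : A := Y * l - l * Y

/-- Odd wheels vanish: `tr(x · ad_y^{2n+1}(x)) = 0` in `A/[A,A]`; equivalently the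
element `Θ(x, ad_y^{2n+1}(x))` of `F(L)` is zero. -/
lemma trc_add (a b : A) : trc (a + b) = trc a + trc b := rfl

lemma trc_cyc (a b : A) : trc (a * b) = trc (b * a) := by
  rw [trc, trc, Submodule.Quotient.eq]
  exact Submodule.subset_span ⟨a, b, rfl⟩

lemma trc_shift (a b : A) : trc (a * adY b) = - trc (adY a * b) := by
  have h1 : a * adY b + adY a * b = Y * (a * b) - (a * b) * Y := by
    unfold adY; noncomm_ring
  have h2 : trc (a * adY b + adY a * b) = 0 := by
    rw [h1, trc, Submodule.Quotient.mk_eq_zero]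
    exact Submodule.subset_span ⟨Y, a * b, rfl⟩
  rw [trc_add] at h2
  exact eq_neg_of_add_eq_zero_left h2

lemma trc_key (i j : ℕ) :
    trc (X * (adY^[i + j] X)) = (-1 : ℝ)^i • trc (adY^[i] X * adY^[j] X) := by
  induction i generalizing j with
  | zero => simp
  | succ i ih =>
    have h : i + 1 + j = i + (j + 1) := by omega
    rw [h, ih (j + 1)]
    have h2 : adY^[j + 1] X = adY (adY^[j] X) := Function.iterate_succ_apply' adY j X
    have h3 : adY^[i + 1] X = adY (adY^[i] X) := Function.iterate_succ_apply' adY i X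
    rw [h2, trc_shift, h3]
    rw [smul_neg, pow_succ, mul_smul]
    simp

theorem odd_wheel_vanishes (n : ℕ) :
    trc (X * (adY^[2 * n + 1] X)) = 0 := by
  have e1 : 2 * n + 1 = n + (n + 1) := by omega
  have e2 : 2 * n + 1 = (n + 1) + n := by omega
  have h1 := trc_key n (n + 1)
  have h2 := trc_key (n + 1) n
  rw [← e1] at h1; rw [← e2] at h2
  have hc : trc (adY^[n] X * adY^[n+1] X) = trc (adY^[n+1] X * adY^[n] X) := trc_cyc _ _
  rw [hc] at h1
  rw [pow_succ, mul_smul] at h2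
  have : trc (X * (adY^[2 * n + 1] X)) + trc (X * (adY^[2 * n + 1] X)) = 0 := by
    nth_rewrite 1 [h1]; nth_rewrite 1 [h2]
    simp
  have h5 : (2 : ℝ) • trc (X * (adY^[2 * n + 1] X)) = 0 := by
    rw [two_smul]; exact this
  have h6 : trc (X * (adY^[2 * n + 1] X))
      = (2 : ℝ)⁻¹ • ((2 : ℝ) • trc (X * (adY^[2 * n + 1] X))) := by
    rw [smul_smul]; norm_num
  rw [h6, h5, smul_zero]
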